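/- Let X be a compact uniform space with uniformity 𝒰, R an equivalence relation on X such that for every γ ∈ 𝒰 there is η ∈ 𝒰 with η ∘ R ∘ η ⊂ R ∘ γ ∘ R, ξ : X → X/R the quotient map, 𝒰/R the quotient uniformity, and 𝒰^R the uniformity on X with base {R ∘ γ ∘ R : γ ∈ 𝒰}. Let f_{0,∞} be a sequence of continuous self-maps of (X,𝒰) and s_{0,∞} a sequence of self-maps of X/R with s_n ∘ ξ = ξ ∘ f_n for all n. Then h(f_{0,∞}, 𝒰^R) ≤ h(s_{0,∞}, 𝒰/R) ≤ h(f_{0,∞}, 𝒰). -/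

import Mathlib

open Filter Set
open scoped Uniformity

/-- `itr f i n = f (i+n-1) ∘ ⋯ ∘ f i`, the composition of `n` maps of the sequence `f`
starting at index `i` (so `itr f i 0 = id`). -/
def itr {X : Type*} (f : ℕ → X → X) (i : ℕ) : ℕ → X → X
  | 0 => id
  | n + 1 => fun x => f (i + n) (itr f i n x)

/-- `E` is an `(n,γ)`-separated set for the nonautonomous system `f`. -/
def IsSep {X : Type*} (f : ℕ → X → X) (n : ℕ) (γ : Set (X × X)) (E : Set X) : Prop :=
  ∀ x ∈ E, ∀ y ∈ E, x ≠ y → ∃ j < n, (itr f 0 j x, itr f 0 j y) ∉ γ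

/-- `F` `(n,γ)`-spans the set `K` for the nonautonomous system `f`. -/
def Spans {X : Type*} (f : ℕ → X → X) (n : ℕ) (γ : Set (X × X)) (F K : Set X) : Prop :=
  ∀ x ∈ K, ∃ y ∈ F, ∀ j < n, (itr f 0 j x, itr f 0 j y) ∈ γ

/-- Maximal cardinality of an `(n,γ)`-separated subset of `Λ`. -/
noncomputable def sepCard {X : Type*} (f : ℕ → X → X) (Λ : Set X) (n : ℕ)
    (γ : Set (X × X)) : ℕ :=
  sSup {m | ∃ E : Finset X, ↑E ⊆ Λ ∧ IsSep f n γ ↑E ∧ E.card = m}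

/-- Minimal cardinality of a subset of `Λ` that `(n,γ)`-spans `Λ`. -/
noncomputable def spanCard {X : Type*} (f : ℕ → X → X) (Λ : Set X) (n : ℕ)
    (γ : Set (X × X)) : ℕ :=
  sInf {m | ∃ F : Finset X, ↑F ⊆ Λ ∧ Spans f n γ ↑F Λ ∧ F.card = m}


/-- Entropy of a nonautonomous system with respect to an explicitly given filter of
entourages (allowing to compare several uniformities on the same set). -/
noncomputable def entropyU {X : Type*} (𝔉 : Filter (X × X)) (f : ℕ → X → X) (Λ : Set X) :
    EReal :=
  ⨆ γ ∈ 𝔉, atTop.limsup fun n : ℕ =>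
    ((Real.log (sepCard f Λ n γ) / n : ℝ) : EReal)


/-
Both inequalities compare maximal separated sets. A set that is separated for the pullback of an
entourage of `X/R` projects injectively onto a separated set of `X/R`, and `R ∘ γ ∘ R` is such a
pullback, which gives the first inequality; conversely, choosing representatives lifts a separated
set of `X/R` to a separated set of `X` for the pulled-back entourage, which gives the second.
Compactness of `X` and continuity of the `f n` make all the separated sets involved finite of
bounded size, so the suprema defining `sepCard` are not the junk value `0`.
-/

section Separated

variable {X Y : Type*} {f : ℕ → X → X} {g : ℕ → Y → Y} {n : ℕ}

theorem continuous_itr [TopologicalSpace X] (hf : ∀ n, Continuous (f n)) (i j : ℕ) :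
    Continuous (itr f i j) := by
  induction j with
  | zero => exact continuous_id
  | succ j ih => exact (hf (i + j)).comp ih

theorem itr_semiconj {π : X → Y} (hs : ∀ n x, g n (π x) = π (f n x)) (i j : ℕ) (x : X) :
    itr g i j (π x) = π (itr f i j x) := by
  induction j with
  | zero => rfl
  | succ j ih => exact (congrArg (g (i + j)) ih).trans (hs _ _)

/-- The Bowen entourage of the nonautonomous system `f`. -/
def itrEntourage (f : ℕ → X → X) (n : ℕ) (γ : Set (X × X)) : Set (X × X) :=
  {p | ∀ j < n, (itr f 0 j p.1, itr f 0 j p.2) ∈ γ}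

theorem isSep_iff_pairwise {γ : Set (X × X)} {E : Set X} :
    IsSep f n γ E ↔ E.Pairwise fun x y => (x, y) ∉ itrEntourage f n γ := by
  simp only [IsSep, Set.Pairwise, itrEntourage, Set.mem_ofPred_eq, not_forall, exists_prop]

theorem IsSep.mono {γ γ' : Set (X × X)} {E : Set X} (hγ : γ ⊆ γ') (hE : IsSep f n γ' E) :
    IsSep f n γ E := fun x hx y hy hxy =>
  let ⟨j, hj, hsep⟩ := hE x hx y hy hxy
  ⟨j, hj, fun hmem => hsep (hγ hmem)⟩

theorem itrEntourage_mem_uniformity [UniformSpace X] [CompactSpace X]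
    (hf : ∀ n, Continuous (f n)) {γ : Set (X × X)} (hγ : γ ∈ 𝓤 X) (n : ℕ) :
    itrEntourage f n γ ∈ 𝓤 X := by
  have hinter : itrEntourage f n γ =
      ⋂ j ∈ Finset.range n, Prod.map (itr f 0 j) (itr f 0 j) ⁻¹' γ := by
    ext p
    simp only [itrEntourage, mem_iInter, Finset.mem_range, mem_preimage]
    exact Iff.rfl
  rw [hinter, biInter_finset_mem]
  exact fun j _ => CompactSpace.uniformContinuous_of_continuous (continuous_itr hf 0 j) hγ

theorem exists_card_le_of_pairwise_not_mem [UniformSpace X] [CompactSpace X]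
    {V : Set (X × X)} (hV : V ∈ 𝓤 X) :
    ∃ N : ℕ, ∀ E : Finset X, (E : Set X).Pairwise (fun x y => (x, y) ∉ V) → E.card ≤ N := by
  obtain ⟨W, hW, hWsymm, hWV⟩ := comp_symm_mem_uniformity_sets hV
  obtain ⟨t, ht, hcover⟩ := isCompact_univ.totallyBounded W hW
  have hnear : ∀ x : X, ∃ y ∈ ht.toFinset, (x, y) ∈ W := fun x => by
    simpa using hcover (mem_univ x)
  choose c hct hxc using hnear
  refine ⟨ht.toFinset.card, fun E hE => Finset.card_le_card_of_injOn c (fun x _ => hct x) ?_⟩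
  intro x hx y hy hcxy
  by_contra hne
  refine hE hx hy hne (hWV ⟨c x, hxc x, ?_⟩)
  rw [hcxy]
  exact SetRel.symm W (hxc y)

theorem exists_card_le_of_isSep [UniformSpace X] [CompactSpace X]
    (hf : ∀ n, Continuous (f n)) {γ : Set (X × X)} (hγ : γ ∈ 𝓤 X) (n : ℕ) :
    ∃ N : ℕ, ∀ E : Finset X, IsSep f n γ E → E.card ≤ N := by
  obtain ⟨N, hN⟩ := exists_card_le_of_pairwise_not_mem (itrEntourage_mem_uniformity hf hγ n)
  exact ⟨N, fun E hE => hN E (isSep_iff_pairwise.1 hE)⟩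

theorem IsSep.image {π : X → Y} (hs : ∀ n x, g n (π x) = π (f n x)) {δ : Set (Y × Y)}
    (hδ : ∀ y, (y, y) ∈ δ) {E : Finset X} (hE : IsSep f n (Prod.map π π ⁻¹' δ) E) :
    ∃ F : Finset Y, IsSep g n δ F ∧ F.card = E.card := by
  classical
  have hsep : ∀ x ∈ E, ∀ y ∈ E, x ≠ y → ∃ j < n, (itr g 0 j (π x), itr g 0 j (π y)) ∉ δ := by
    intro x hx y hy hxy
    obtain ⟨j, hj, hsep⟩ := hE x hx y hy hxy
    exact ⟨j, hj, by rwa [itr_semiconj hs, itr_semiconj hs]⟩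
  have hinj : Set.InjOn π E := fun x hx y hy hxy => by
    by_contra hne
    obtain ⟨j, -, hj⟩ := hsep x hx y hy hne
    exact hj (hxy ▸ hδ _)
  refine ⟨E.image π, ?_, Finset.card_image_of_injOn hinj⟩
  simp only [IsSep, Finset.coe_image, forall_mem_image]
  exact fun x hx y hy hxy => hsep x hx y hy (ne_of_apply_ne π hxy)

theorem IsSep.lift {π : X → Y} (hπ : Function.Surjective π) (hs : ∀ n x, g n (π x) = π (f n x))
    {δ : Set (Y × Y)} {F : Finset Y} (hF : IsSep g n δ F) :
    ∃ E : Finset X, IsSep f n (Prod.map π π ⁻¹' δ) E ∧ E.card = F.card := by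
  classical
  refine ⟨F.image (Function.surjInv hπ), ?_,
    Finset.card_image_of_injective _ (Function.injective_surjInv hπ)⟩
  simp only [IsSep, Finset.coe_image, forall_mem_image]
  intro x hx y hy hxy
  obtain ⟨j, hj, hsep⟩ := hF x hx y hy (ne_of_apply_ne _ hxy)
  refine ⟨j, hj, ?_⟩
  simpa only [mem_preimage, Prod.map, ← itr_semiconj hs, Function.surjInv_eq hπ] using hsep

end Separated

section SepCard

variable {X Y : Type*} {f : ℕ → X → X} {g : ℕ → Y → Y} {n : ℕ}

theorem card_le_sepCard {Λ : Set X} {γ : Set (X × X)}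
    (hbdd : ∃ N : ℕ, ∀ E : Finset X, IsSep f n γ E → E.card ≤ N) {E : Finset X}
    (hΛ : ↑E ⊆ Λ) (hE : IsSep f n γ E) : E.card ≤ sepCard f Λ n γ := by
  obtain ⟨N, hN⟩ := hbdd
  refine le_csSup ⟨N, ?_⟩ ⟨E, hΛ, hE, rfl⟩
  rintro _ ⟨E', -, hE', rfl⟩
  exact hN E' hE'

theorem sepCard_le {Λ : Set X} {γ : Set (X × X)} {N : ℕ}
    (h : ∀ E : Finset X, ↑E ⊆ Λ → IsSep f n γ E → E.card ≤ N) : sepCard f Λ n γ ≤ N :=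
  csSup_le' fun _ ⟨E, hΛ, hE, hcard⟩ => hcard ▸ h E hΛ hE

variable [UniformSpace X] [CompactSpace X] {π : X → Y}

theorem sepCard_le_sepCard_image (hf : ∀ n, Continuous (f n)) (hπ : Function.Surjective π)
    (hs : ∀ n x, g n (π x) = π (f n x)) {γ γ' : Set (X × X)} (hγ : γ ∈ 𝓤 X)
    (hγ' : Prod.map π π ⁻¹' (Prod.map π π '' γ) ⊆ γ') (n : ℕ) :
    sepCard f univ n γ' ≤ sepCard g univ n (Prod.map π π '' γ) := by
  have hbdd : ∃ N : ℕ, ∀ F : Finset Y, IsSep g n (Prod.map π π '' γ) F → F.card ≤ N := by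
    obtain ⟨N, hN⟩ := exists_card_le_of_isSep hf hγ n
    refine ⟨N, fun F hF => ?_⟩
    obtain ⟨E, hE, hcard⟩ := hF.lift hπ hs
    exact hcard ▸ hN E (hE.mono (subset_preimage_image _ _))
  have hrefl : ∀ y, (y, y) ∈ Prod.map π π '' γ := fun y => by
    obtain ⟨x, rfl⟩ := hπ y
    exact ⟨(x, x), refl_mem_uniformity hγ, rfl⟩
  refine sepCard_le fun E _ hE => ?_
  obtain ⟨F, hF, hcard⟩ := (hE.mono hγ').image hs hrefl
  exact hcard ▸ card_le_sepCard hbdd (subset_univ _) hF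

theorem sepCard_le_sepCard_preimage (hf : ∀ n, Continuous (f n)) (hπ : Function.Surjective π)
    (hs : ∀ n x, g n (π x) = π (f n x)) {δ : Set (Y × Y)} (hδ : Prod.map π π ⁻¹' δ ∈ 𝓤 X)
    (n : ℕ) : sepCard g univ n δ ≤ sepCard f univ n (Prod.map π π ⁻¹' δ) := by
  refine sepCard_le fun F _ hF => ?_
  obtain ⟨E, hE, hcard⟩ := hF.lift hπ hs
  exact hcard ▸ card_le_sepCard (exists_card_le_of_isSep hf hδ n) (subset_univ _) hE

end SepCard

theorem entropyU_le_entropyU {X Y : Type*} {𝔉 : Filter (X × X)} {𝔊 : Filter (Y × Y)}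
    {f : ℕ → X → X} {g : ℕ → Y → Y} {Λ : Set X} {Λ' : Set Y}
    (h : ∀ γ ∈ 𝔉, ∃ δ ∈ 𝔊, ∀ n, sepCard f Λ n γ ≤ sepCard g Λ' n δ) :
    entropyU 𝔉 f Λ ≤ entropyU 𝔊 g Λ' := by
  refine iSup₂_le fun γ hγ => ?_
  obtain ⟨δ, hδ, hle⟩ := h γ hγ
  refine le_iSup₂_of_le δ hδ (limsup_le_limsup (Eventually.of_forall fun n => ?_))
  have hlog : Real.log (sepCard f Λ n γ) ≤ Real.log (sepCard g Λ' n δ) := by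
    rcases Nat.eq_zero_or_pos (sepCard f Λ n γ) with h0 | hpos
    · simpa [h0] using Real.log_natCast_nonneg _
    · exact Real.log_le_log (by exact_mod_cast hpos) (by exact_mod_cast hle n)
  exact EReal.coe_le_coe_iff.2 (div_le_div_of_nonneg_right hlog n.cast_nonneg)

theorem preimage_image_prodMap_mk_subset {X : Type*} (R : Setoid X) (γ : Set (X × X)) :
    Prod.map (Quotient.mk R) (Quotient.mk R) ⁻¹' (Prod.map (Quotient.mk R) (Quotient.mk R) '' γ) ⊆
      SetRel.comp {p : X × X | R.r p.1 p.2} (SetRel.comp γ {p : X × X | R.r p.1 p.2}) := by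
  rintro ⟨x, y⟩ ⟨⟨a, b⟩, hab, heq⟩
  obtain ⟨ha, hb⟩ := Prod.ext_iff.1 heq
  exact ⟨a, R.symm (Quotient.exact ha), b, hab, Quotient.exact hb⟩

theorem entropy_quotient_general {X : Type*} [UniformSpace X] [CompactSpace X]
    (R : Setoid X)
    (f : ℕ → X → X) (hf : ∀ n, Continuous (f n))
    (s : ℕ → Quotient R → Quotient R)
    (hs : ∀ n, ∀ x : X, s n (Quotient.mk R x) = Quotient.mk R (f n x)) :
    entropyU ((𝓤 X).lift' fun γ =>
        SetRel.comp {p : X × X | R.r p.1 p.2} (SetRel.comp γ {p : X × X | R.r p.1 p.2}))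
      f Set.univ ≤
      entropyU (Filter.map (Prod.map (Quotient.mk R) (Quotient.mk R)) (𝓤 X)) s Set.univ ∧
    entropyU (Filter.map (Prod.map (Quotient.mk R) (Quotient.mk R)) (𝓤 X)) s Set.univ ≤
      entropyU (𝓤 X) f Set.univ := by
  have hmono : Monotone fun γ : Set (X × X) =>
      SetRel.comp {p : X × X | R.r p.1 p.2} (SetRel.comp γ {p : X × X | R.r p.1 p.2}) :=
    fun _ _ h => SetRel.comp_subset_comp_right (SetRel.comp_subset_comp_left h)
  refine ⟨entropyU_le_entropyU fun γ' hγ' => ?_, entropyU_le_entropyU fun δ hδ => ?_⟩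
  · obtain ⟨γ, hγ, hγγ'⟩ := (mem_lift'_sets hmono).1 hγ'
    exact ⟨_, image_mem_map hγ, sepCard_le_sepCard_image hf Quotient.mk_surjective hs hγ
      ((preimage_image_prodMap_mk_subset R γ).trans hγγ')⟩
  · exact ⟨_, hδ, sepCard_le_sepCard_preimage hf Quotient.mk_surjective hs hδ⟩

/-- Entropy of a quotient system: if `R` is a compatible equivalence relation on the
compact uniform space `(X, 𝒰)`, `ξ : X → X/R` the quotient map, and `s_{0,∞}` a sequence
of self-maps of `X/R` with `s_n ∘ ξ = ξ ∘ f_n`, then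
`h(f_{0,∞}, 𝒰^R) ≤ h(s_{0,∞}, 𝒰/R) ≤ h(f_{0,∞}, 𝒰)`, where `𝒰/R` is the quotient
uniformity and `𝒰^R` is the uniformity on `X` with base `{R ∘ γ ∘ R : γ ∈ 𝒰}`. -/
theorem entropy_quotient {X : Type*} [UniformSpace X] [CompactSpace X]
    (R : Setoid X)
    (hR : ∀ γ ∈ 𝓤 X, ∃ η ∈ 𝓤 X,
      SetRel.comp η (SetRel.comp {p : X × X | R.r p.1 p.2} η) ⊆
        SetRel.comp {p : X × X | R.r p.1 p.2} (SetRel.comp γ {p : X × X | R.r p.1 p.2}))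
    (f : ℕ → X → X) (hf : ∀ n, Continuous (f n))
    (s : ℕ → Quotient R → Quotient R)
    (hs : ∀ n, ∀ x : X, s n (Quotient.mk R x) = Quotient.mk R (f n x)) :
    entropyU ((𝓤 X).lift' fun γ =>
        SetRel.comp {p : X × X | R.r p.1 p.2} (SetRel.comp γ {p : X × X | R.r p.1 p.2}))
      f Set.univ ≤
      entropyU (Filter.map (Prod.map (Quotient.mk R) (Quotient.mk R)) (𝓤 X)) s Set.univ ∧
    entropyU (Filter.map (Prod.map (Quotient.mk R) (Quotient.mk R)) (𝓤 X)) s Set.univ ≤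
      entropyU (𝓤 X) f Set.univ :=
  entropy_quotient_general R f hf s hs
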